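/- arXiv:1005.0768 — 2 statements merged into one kernel-verified Lean document; each statement's English description precedes it below -/
import Mathlib

section
/- Balance sheet bound: for every solution (r¹,…,r^m,s) of the liquidation value system, the size of the sum of all balance sheets satisfies ‖s‖₁ + Σ_{i=1}^m ‖rⁱ‖₁ ≤ (L^max + 1)·‖a‖₁ = ‖a‖₁/(1 − I^max). -/
open Matrix Finset Filter

noncomputable section

/-- Componentwise minimum of two vectors in ℝ^n. -/
def vmin {n : ℕ} (x y : Fin n → ℝ) : Fin n → ℝ := fun k => min (x k) (y k)

/-- Componentwise positive part of a vector in ℝ^n. -/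
def vpos {n : ℕ} (x : Fin n → ℝ) : Fin n → ℝ := fun k => max (x k) 0

/-- ℓ¹-norm of a vector in ℝ^n. -/
def l1 {n : ℕ} (x : Fin n → ℝ) : ℝ := ∑ k, |x k|

/-- An n×n matrix is strictly left substochastic if all entries are nonnegative
and every column sum is < 1. -/
def StrictlyLeftSubstochastic {n : ℕ} (M : Matrix (Fin n) (Fin n) ℝ) : Prop :=
  (∀ i j, 0 ≤ M i j) ∧ ∀ j, ∑ i, M i j < 1

/-- The liquidation value system: `r j` for `j = 0` is the highest-priority recovery claim,
`s` is equity. -/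
def LiqSystem {n m : ℕ} (a : Fin n → ℝ) (Ms : Matrix (Fin n) (Fin n) ℝ)
    (Md : Fin m → Matrix (Fin n) (Fin n) ℝ)
    (d : Fin m → (Fin m → Fin n → ℝ) → (Fin n → ℝ) → (Fin n → ℝ))
    (r : Fin m → Fin n → ℝ) (s : Fin n → ℝ) : Prop :=
  (∀ j : Fin m, (j : ℕ) = 0 →
    r j = vmin (d j r s) (a + Ms.mulVec s + ∑ i, (Md i).mulVec (r i))) ∧
  (∀ j : Fin m, (j : ℕ) ≠ 0 →
    r j = vmin (d j r s)
      (vpos (a + Ms.mulVec s + ∑ i, (Md i).mulVec (r i) - ∑ i ∈ Finset.Iio j, d i r s))) ∧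
  s = vpos (a + Ms.mulVec s + ∑ i, (Md i).mulVec (r i) - ∑ i, d i r s)

/-- I^max : the maximum column sum over all ownership matrices. -/
def Imax {n m : ℕ} (Ms : Matrix (Fin n) (Fin n) ℝ)
    (Md : Fin m → Matrix (Fin n) (Fin n) ℝ) : ℝ :=
  max (⨆ j, ∑ i, Ms i j) (⨆ l, ⨆ j, ∑ i, (Md l) i j)

/-!
Every recovery claim `rⁱ` is nonnegative: for `i ≠ 1` this is built into the system, and the
negative part `u` of `r¹` satisfies `u ≤ M^{d,1} u`, which forces `u = 0` because the column sums
of `M^{d,1}` are `< 1`. Once all balance sheets are nonnegative, so is the asset value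
`V = a + Mˢ s + Σ M^{d,i} rⁱ`, and the waterfall payments add up to it: `s + Σ rⁱ = V`
componentwise. Summing over the banks gives
`‖s‖₁ + Σ ‖rⁱ‖₁ = ‖V‖₁ ≤ ‖a‖₁ + I^max (‖s‖₁ + Σ ‖rⁱ‖₁)`.
-/

lemma min_add_max_sub_eq_max {b : ℝ} (hb : 0 ≤ b) (q : ℝ) :
    min b (max q 0) + max (q - b) 0 = max q 0 := by
  rcases le_total q 0 with h | h <;> rcases le_total b q with h' | h' <;>
    simp only [min_def, max_def] <;> split_ifs <;> linarith

lemma sum_waterfall_add_max_sub_eq_max {ι : Type*} [LinearOrder ι] [LocallyFiniteOrderBot ι]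
    (p : ℝ) {f g : ι → ℝ} (hf : ∀ j, 0 ≤ f j)
    (hg : ∀ j, g j = min (f j) (max (p - ∑ i ∈ Iio j, f i) 0))
    {s : Finset ι} (hs : IsLowerSet (s : Set ι)) :
    ∑ j ∈ s, g j + max (p - ∑ j ∈ s, f j) 0 = max p 0 := by
  classical
  induction s using Finset.induction_on_max with
  | empty => simp
  | insert a s hlt ih =>
    have ha : a ∉ s := fun h => lt_irrefl a (hlt a h)
    have mem_of_le : ∀ x ∈ s, ∀ y ≤ x, y ∈ s := fun x hx y hyx =>
      (mem_insert.1 (hs hyx (mem_insert_of_mem hx))).resolve_left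
        fun hya => (hyx.trans_lt (hlt x hx)).ne hya
    have hIio : Iio a = s := by
      ext x
      refine ⟨fun hx => ?_, fun hx => mem_Iio.2 (hlt x hx)⟩
      exact (mem_insert.1 (hs (mem_Iio.1 hx).le (mem_insert_self a s))).resolve_left
        (mem_Iio.1 hx).ne
    rw [← ih fun x y hyx hx => mem_of_le x hx y hyx, sum_insert ha, sum_insert ha, hg a, hIio,
      ← sub_sub, sub_right_comm]
    linarith [min_add_max_sub_eq_max (hf a) (p - ∑ j ∈ s, f j)]

lemma Real.iSup_lt_of_forall_lt {ι : Type*} [Finite ι] {f : ι → ℝ} {c : ℝ} (hc : 0 < c)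
    (h : ∀ i, f i < c) : ⨆ i, f i < c := by
  cases isEmpty_or_nonempty ι
  · simpa using hc
  · obtain ⟨i, hi⟩ := exists_eq_ciSup_of_finite (f := f)
    exact hi ▸ h i

section Matrix

variable {ι : Type*} [Fintype ι] {M : Matrix ι ι ℝ}

lemma Matrix.sum_mulVec_eq (x : ι → ℝ) :
    ∑ k, (M *ᵥ x) k = ∑ j, (∑ i, M i j) * x j := by
  simp only [mulVec, dotProduct, sum_mul]
  exact sum_comm

lemma Matrix.sum_mulVec_le_mul_sum {c : ℝ} (hc : ∀ j, ∑ i, M i j ≤ c) {x : ι → ℝ}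
    (hx : 0 ≤ x) : ∑ k, (M *ᵥ x) k ≤ c * ∑ j, x j := by
  rw [sum_mulVec_eq, mul_sum]
  exact sum_le_sum fun j _ => mul_le_mul_of_nonneg_right (hc j) (hx j)

lemma Matrix.mulVec_nonneg (hM : ∀ i j, 0 ≤ M i j) {x : ι → ℝ} (hx : 0 ≤ x) :
    0 ≤ M *ᵥ x :=
  fun k => sum_nonneg fun j _ => mul_nonneg (hM k j) (hx j)

end Matrix

lemma StrictlyLeftSubstochastic.eq_zero_of_le_mulVec {n : ℕ} {M : Matrix (Fin n) (Fin n) ℝ}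
    (hM : StrictlyLeftSubstochastic M) {u : Fin n → ℝ} (hu : 0 ≤ u) (h : u ≤ M *ᵥ u) :
    u = 0 := by
  have hterm : ∀ j ∈ univ, 0 ≤ (1 - ∑ i, M i j) * u j := fun j _ =>
    mul_nonneg (sub_nonneg.2 (hM.2 j).le) (hu j)
  have hsum : ∑ j, (1 - ∑ i, M i j) * u j = 0 := by
    refine le_antisymm ?_ (sum_nonneg hterm)
    simp only [sub_mul, one_mul, sum_sub_distrib, ← sum_mulVec_eq]
    exact sub_nonpos.2 (sum_le_sum fun k _ => h k)
  funext j
  exact ((mul_eq_zero.1 ((sum_eq_zero_iff_of_nonneg hterm).1 hsum j (mem_univ j))).resolve_left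
    (sub_pos.2 (hM.2 j)).ne')

section Imax

variable {n m : ℕ} {Ms : Matrix (Fin n) (Fin n) ℝ} {Md : Fin m → Matrix (Fin n) (Fin n) ℝ}

lemma colSum_le_Imax_left (j : Fin n) : ∑ i, Ms i j ≤ Imax Ms Md :=
  (le_ciSup (Finite.bddAbove_range fun j => ∑ i, Ms i j) j).trans (le_max_left _ _)

lemma colSum_le_Imax_right (l : Fin m) (j : Fin n) : ∑ i, Md l i j ≤ Imax Ms Md :=
  ((le_ciSup (Finite.bddAbove_range fun j => ∑ i, Md l i j) j).trans
    (le_ciSup (Finite.bddAbove_range fun l => ⨆ j, ∑ i, Md l i j) l)).trans (le_max_right _ _)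

lemma Imax_lt_one (hMs : StrictlyLeftSubstochastic Ms)
    (hMd : ∀ i, StrictlyLeftSubstochastic (Md i)) : Imax Ms Md < 1 :=
  max_lt (Real.iSup_lt_of_forall_lt one_pos hMs.2)
    (Real.iSup_lt_of_forall_lt one_pos fun l => Real.iSup_lt_of_forall_lt one_pos (hMd l).2)

end Imax

lemma l1_eq_sum_of_nonneg {n : ℕ} {x : Fin n → ℝ} (hx : 0 ≤ x) : l1 x = ∑ k, x k :=
  sum_congr rfl fun k _ => abs_of_nonneg (hx k)

def assetValue {n m : ℕ} (a : Fin n → ℝ) (Ms : Matrix (Fin n) (Fin n) ℝ)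
    (Md : Fin m → Matrix (Fin n) (Fin n) ℝ) (r : Fin m → Fin n → ℝ) (s : Fin n → ℝ) :
    Fin n → ℝ :=
  a + Ms *ᵥ s + ∑ i, Md i *ᵥ r i

lemma assetValue_apply {n m : ℕ} (a : Fin n → ℝ) (Ms : Matrix (Fin n) (Fin n) ℝ)
    (Md : Fin m → Matrix (Fin n) (Fin n) ℝ) (r : Fin m → Fin n → ℝ) (s : Fin n → ℝ)
    (k : Fin n) : assetValue a Ms Md r s k = a k + (Ms *ᵥ s) k + ∑ i, (Md i *ᵥ r i) k := by
  simp [assetValue, Finset.sum_apply]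

namespace LiqSystem

variable {n m : ℕ} {a : Fin n → ℝ} {Ms : Matrix (Fin n) (Fin n) ℝ}
  {Md : Fin m → Matrix (Fin n) (Fin n) ℝ}
  {d : Fin m → (Fin m → Fin n → ℝ) → (Fin n → ℝ) → (Fin n → ℝ)}
  {r : Fin m → Fin n → ℝ} {s : Fin n → ℝ}

lemma equity_nonneg (h : LiqSystem a Ms Md d r s) : 0 ≤ s := by
  rw [h.2.2]
  exact fun k => le_max_right _ _

lemma recovery_nonneg_of_ne_zero (h : LiqSystem a Ms Md d r s) (hd : ∀ i r s k, 0 ≤ d i r s k)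
    {j : Fin m} (hj : (j : ℕ) ≠ 0) : 0 ≤ r j := by
  rw [h.2.1 j hj]
  exact fun k => le_min (hd j r s k) (le_max_right _ _)

lemma recovery_nonneg (h : LiqSystem a Ms Md d r s) (ha : 0 ≤ a)
    (hMs : StrictlyLeftSubstochastic Ms) (hMd : ∀ i, StrictlyLeftSubstochastic (Md i))
    (hd : ∀ i r s k, 0 ≤ d i r s k) (j : Fin m) : 0 ≤ r j := by
  obtain hj | hj := ne_or_eq (j : ℕ) 0
  · exact h.recovery_nonneg_of_ne_zero hd hj
  set u := vpos (-r j)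
  have hu : 0 ≤ u := fun k => le_max_right _ _
  have hMr_add_Mu : ∀ k, 0 ≤ (Md j *ᵥ r j) k + (Md j *ᵥ u) k := by
    have hru : 0 ≤ r j + u := fun k =>
      show 0 ≤ r j k + max (-r j k) 0 by linarith [le_max_left (-r j k) 0]
    simpa only [mulVec_add, Pi.le_def, Pi.add_apply, Pi.zero_apply] using
      mulVec_nonneg (hMd j).1 hru
  have hMr_le_value : ∀ k, (Md j *ᵥ r j) k ≤ assetValue a Ms Md r s k := fun k => by
    have hothers : 0 ≤ ∑ i ∈ univ.erase j, (Md i *ᵥ r i) k := sum_nonneg fun i hi =>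
      mulVec_nonneg (hMd i).1 (h.recovery_nonneg_of_ne_zero hd
        fun hi0 => (mem_erase.1 hi).1 (Fin.ext (hi0.trans hj.symm))) k
    have hs : 0 ≤ (Ms *ᵥ s) k := Matrix.mulVec_nonneg hMs.1 h.equity_nonneg k
    rw [assetValue_apply, ← add_sum_erase _ _ (mem_univ j)]
    linarith [show 0 ≤ a k from ha k]
  have hu_le : u ≤ Md j *ᵥ u := fun k => by
    have hrk : r j k = min (d j r s k) (assetValue a Ms Md r s k) := congrFun (h.1 j hj) k
    rcases le_or_gt 0 (r j k) with hr | hr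
    · simpa [u, vpos, hr] using Matrix.mulVec_nonneg (hMd j).1 hu k
    · have hrV : r j k = assetValue a Ms Md r s k := by
        rcases min_cases (d j r s k) (assetValue a Ms Md r s k) with ⟨hmin, -⟩ | ⟨hmin, -⟩
        · linarith [hd j r s k]
        · rw [hrk, hmin]
      have huk : u k = -r j k := max_eq_left (neg_nonneg.2 hr.le)
      linarith [hMr_le_value k, hMr_add_Mu k]
  have hu0 := congrFun ((hMd j).eq_zero_of_le_mulVec hu hu_le)
  exact fun k => by simpa [u, vpos] using hu0 k

lemma assetValue_nonneg (h : LiqSystem a Ms Md d r s) (ha : 0 ≤ a)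
    (hMs : StrictlyLeftSubstochastic Ms) (hMd : ∀ i, StrictlyLeftSubstochastic (Md i))
    (hd : ∀ i r s k, 0 ≤ d i r s k) : 0 ≤ assetValue a Ms Md r s :=
  add_nonneg (add_nonneg ha (mulVec_nonneg hMs.1 h.equity_nonneg))
    (sum_nonneg fun i _ => mulVec_nonneg (hMd i).1 (h.recovery_nonneg ha hMs hMd hd i))

lemma recovery_eq_waterfall (h : LiqSystem a Ms Md d r s) (hV : 0 ≤ assetValue a Ms Md r s)
    (j : Fin m) (k : Fin n) :
    r j k = min (d j r s k) (max (assetValue a Ms Md r s k - ∑ i ∈ Iio j, d i r s k) 0) := by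
  by_cases hj : (j : ℕ) = 0
  · have hIio : ∑ i ∈ Iio j, d i r s k = 0 := sum_eq_zero fun i hi =>
      absurd (Fin.lt_def.1 (mem_Iio.1 hi)) (by omega)
    rw [hIio, sub_zero, max_eq_left (show 0 ≤ assetValue a Ms Md r s k from hV k)]
    exact congrFun (h.1 j hj) k
  · simpa only [vmin, vpos, Pi.sub_apply, Finset.sum_apply, assetValue] using
      congrFun (h.2.1 j hj) k

lemma equity_add_sum_recovery (h : LiqSystem a Ms Md d r s) (ha : 0 ≤ a)
    (hMs : StrictlyLeftSubstochastic Ms) (hMd : ∀ i, StrictlyLeftSubstochastic (Md i))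
    (hd : ∀ i r s k, 0 ≤ d i r s k) (k : Fin n) :
    s k + ∑ j, r j k = assetValue a Ms Md r s k := by
  have hV := h.assetValue_nonneg ha hMs hMd hd
  have hVk : 0 ≤ assetValue a Ms Md r s k := hV k
  have hs : s k = max (assetValue a Ms Md r s k - ∑ j, d j r s k) 0 := by
    simpa only [vpos, Pi.sub_apply, Finset.sum_apply, assetValue] using congrFun h.2.2 k
  rw [hs, add_comm, sum_waterfall_add_max_sub_eq_max _ (fun j => hd j r s k)
    (h.recovery_eq_waterfall hV · k) (by simpa using isLowerSet_univ), max_eq_left hVk]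

lemma l1_add_sum_l1_le (h : LiqSystem a Ms Md d r s) (ha : 0 ≤ a)
    (hMs : StrictlyLeftSubstochastic Ms) (hMd : ∀ i, StrictlyLeftSubstochastic (Md i))
    (hd : ∀ i r s k, 0 ≤ d i r s k) :
    l1 s + ∑ i, l1 (r i) ≤ l1 a + Imax Ms Md * (l1 s + ∑ i, l1 (r i)) := by
  have hr := h.recovery_nonneg ha hMs hMd hd
  simp only [l1_eq_sum_of_nonneg ha, l1_eq_sum_of_nonneg h.equity_nonneg,
    l1_eq_sum_of_nonneg (hr _)]
  calc ∑ k, s k + ∑ i, ∑ k, r i k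
      = ∑ k, assetValue a Ms Md r s k := by
        rw [sum_comm (f := fun i k => r i k), ← sum_add_distrib]
        exact sum_congr rfl fun k _ => h.equity_add_sum_recovery ha hMs hMd hd k
    _ = ∑ k, a k + ∑ k, (Ms *ᵥ s) k + ∑ i, ∑ k, (Md i *ᵥ r i) k := by
        simp only [assetValue_apply, sum_add_distrib]
        rw [sum_comm]
    _ ≤ ∑ k, a k + Imax Ms Md * ∑ k, s k + ∑ i, Imax Ms Md * ∑ k, r i k := by
        gcongr with i
        · exact sum_mulVec_le_mul_sum colSum_le_Imax_left h.equity_nonneg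
        · exact sum_mulVec_le_mul_sum (colSum_le_Imax_right i) (hr i)
    _ = ∑ k, a k + Imax Ms Md * (∑ k, s k + ∑ i, ∑ k, r i k) := by
        rw [← mul_sum]
        ring

end LiqSystem

theorem balance_sheet_bound_general {n m : ℕ}
    (a : Fin n → ℝ) (ha : ∀ k, 0 ≤ a k)
    (Ms : Matrix (Fin n) (Fin n) ℝ) (hMs : StrictlyLeftSubstochastic Ms)
    (Md : Fin m → Matrix (Fin n) (Fin n) ℝ) (hMd : ∀ i, StrictlyLeftSubstochastic (Md i))
    (d : Fin m → (Fin m → Fin n → ℝ) → (Fin n → ℝ) → (Fin n → ℝ))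
    (hd : ∀ i r s k, 0 ≤ d i r s k)
    (r : Fin m → Fin n → ℝ) (s : Fin n → ℝ)
    (hsol : LiqSystem a Ms Md d r s) :
    l1 s + ∑ i, l1 (r i) ≤ (Imax Ms Md / (1 - Imax Ms Md) + 1) * l1 a ∧
    (Imax Ms Md / (1 - Imax Ms Md) + 1) * l1 a = l1 a / (1 - Imax Ms Md) := by
  have hI : 0 < 1 - Imax Ms Md := sub_pos.2 (Imax_lt_one hMs hMd)
  have hL : (Imax Ms Md / (1 - Imax Ms Md) + 1) * l1 a = l1 a / (1 - Imax Ms Md) := by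
    field_simp
    ring
  refine ⟨hL ▸ (le_div_iff₀ hI).2 ?_, hL⟩
  linarith [hsol.l1_add_sum_l1_le ha hMs hMd hd]

/-- Balance sheet bound: the size of the sum of all balance sheets is at most
(L^max + 1)·‖a‖₁ = ‖a‖₁/(1 − I^max). -/
theorem balance_sheet_bound {n m : ℕ} (hn : 0 < n) (hm : 0 < m)
    (a : Fin n → ℝ) (ha : ∀ k, 0 ≤ a k)
    (Ms : Matrix (Fin n) (Fin n) ℝ) (hMs : StrictlyLeftSubstochastic Ms)
    (Md : Fin m → Matrix (Fin n) (Fin n) ℝ) (hMd : ∀ i, StrictlyLeftSubstochastic (Md i))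
    (d : Fin m → (Fin m → Fin n → ℝ) → (Fin n → ℝ) → (Fin n → ℝ))
    (hd : ∀ i r s k, 0 ≤ d i r s k)
    (r : Fin m → Fin n → ℝ) (s : Fin n → ℝ)
    (hsol : LiqSystem a Ms Md d r s) :
    l1 s + ∑ i, l1 (r i) ≤ (Imax Ms Md / (1 - Imax Ms Md) + 1) * l1 a ∧
    (Imax Ms Md / (1 - Imax Ms Md) + 1) * l1 a = l1 a / (1 - Imax Ms Md) :=
  balance_sheet_bound_general a ha Ms hMs Md hMd d hd r s hsol
end
end

section
/- Uniqueness of the no-arbitrage price equilibrium: under the seniority structure condition on the liability functions, the liquidation value system has exactly one solution (r¹,…,r^m,s) ∈ (ℝ^n)^{m+1}. -/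
open Matrix Finset Filter

noncomputable section

/-!
Whatever a node pays out is determined by the value `y = Mˢ s + Σ M^{d,l} r^l` flowing into it:
node `k` distributes its assets `a_k + y_k` by seniority over the claims `ψⁱ_k(y_k)` and keeps
the rest as equity. Solutions of the system are thus the fixed points of
`y ↦ Mˢ s(y) + Σ M^{d,l} r^l(y)`. By the seniority condition every payout of node `k` is monotone
in `y_k`, and together they add up to `a_k + y_k`; so a change of `y_k` moves them by at most
`|Δy_k|` in total. Since all column sums are `< 1`, the map is a contraction for the ℓ¹ norm,
and Banach's fixed point theorem applies.
-/

theorem exists_le_lt_of_forall_lt {ι β : Type*} [Finite ι] [LinearOrder β] {f : ι → β}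
    {a b : β} (hab : a < b) (hf : ∀ i, f i < b) : ∃ K, a ≤ K ∧ K < b ∧ ∀ i, f i ≤ K := by
  cases isEmpty_or_nonempty ι
  · exact ⟨a, le_rfl, hab, isEmptyElim⟩
  · obtain ⟨i₀, hi₀⟩ := Finite.exists_max f
    exact ⟨max a (f i₀), le_max_left _ _, max_lt hab (hf i₀),
      fun i => (hi₀ i).trans (le_max_right _ _)⟩

theorem exists_colSum_le_of_strictlyLeftSubstochastic {n m : ℕ}
    {Ms : Matrix (Fin n) (Fin n) ℝ} {Md : Fin m → Matrix (Fin n) (Fin n) ℝ}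
    (hMs : StrictlyLeftSubstochastic Ms) (hMd : ∀ l, StrictlyLeftSubstochastic (Md l)) :
    ∃ K, 0 ≤ K ∧ K < 1 ∧ (∀ j, ∑ i, Ms i j ≤ K) ∧ ∀ l j, ∑ i, Md l i j ≤ K := by
  obtain ⟨Ks, hKs0, hKs1, hKs⟩ := exists_le_lt_of_forall_lt zero_lt_one hMs.2
  obtain ⟨Kd, -, hKd1, hKd⟩ := exists_le_lt_of_forall_lt (f := fun p : Fin m × Fin n =>
    ∑ i, Md p.1 i p.2) zero_lt_one fun p => (hMd p.1).2 p.2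
  exact ⟨max Ks Kd, hKs0.trans (le_max_left _ _), max_lt hKs1 hKd1,
    fun j => (hKs j).trans (le_max_left _ _), fun l j => (hKd (l, j)).trans (le_max_right _ _)⟩

section L1

variable {n : ℕ}

theorem l1_add_le (x y : Fin n → ℝ) : l1 (x + y) ≤ l1 x + l1 y := by
  simp only [l1, Pi.add_apply, ← sum_add_distrib]
  exact sum_le_sum fun k _ => abs_add_le _ _

theorem l1_sum_le {ι : Type*} (s : Finset ι) (x : ι → Fin n → ℝ) :
    l1 (∑ i ∈ s, x i) ≤ ∑ i ∈ s, l1 (x i) := by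
  simp only [l1, Finset.sum_apply]
  rw [sum_comm]
  exact sum_le_sum fun k _ => abs_sum_le_sum_abs _ _

theorem l1_mulVec_le {M : Matrix (Fin n) (Fin n) ℝ} {K : ℝ} (hM : ∀ i j, 0 ≤ M i j)
    (hK : ∀ j, ∑ i, M i j ≤ K) (x : Fin n → ℝ) : l1 (M *ᵥ x) ≤ K * l1 x := by
  calc l1 (M *ᵥ x) = ∑ i, |∑ j, M i j * x j| := rfl
    _ ≤ ∑ i, ∑ j, M i j * |x j| := by
        refine sum_le_sum fun i _ => (abs_sum_le_sum_abs _ _).trans_eq ?_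
        simp only [abs_mul, abs_of_nonneg (hM _ _)]
    _ = ∑ j, (∑ i, M i j) * |x j| := by
        rw [sum_comm]
        simp only [sum_mul]
    _ ≤ K * l1 x := by
        rw [l1, mul_sum]
        exact sum_le_sum fun j _ => mul_le_mul_of_nonneg_right (hK j) (abs_nonneg _)

theorem existsUnique_isFixedPt_of_l1_le {f : (Fin n → ℝ) → Fin n → ℝ} {K : ℝ} (hK0 : 0 ≤ K)
    (hK1 : K < 1) (hf : ∀ x y, l1 (f x - f y) ≤ K * l1 (x - y)) :
    ∃! x, Function.IsFixedPt f x := by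
  let g (x : PiLp 1 fun _ : Fin n => ℝ) : PiLp 1 fun _ : Fin n => ℝ := WithLp.toLp 1 (f x)
  have hdist (x y : PiLp 1 fun _ : Fin n => ℝ) : dist x y = l1 (x.ofLp - y.ofLp) := by
    simp [PiLp.dist_eq_of_L1, l1, Real.dist_eq]
  have hg : ContractingWith ⟨K, hK0⟩ g :=
    ⟨by exact_mod_cast hK1, LipschitzWith.of_dist_le_mul fun x y => by
      rw [hdist, hdist]
      exact hf x y⟩
  refine ⟨(ContractingWith.fixedPoint g hg).ofLp,
    congrArg WithLp.ofLp hg.fixedPoint_isFixedPt, fun x hx => ?_⟩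
  exact congrArg WithLp.ofLp (hg.fixedPoint_unique (x := WithLp.toLp 1 x) (congrArg _ hx))

end L1

theorem Function.existsUnique_isFixedPt_comp {α β : Type*} {f : α → β} {g : β → α}
    (h : ∃! y, IsFixedPt (f ∘ g) y) : ∃! x, IsFixedPt (g ∘ f) x := by
  obtain ⟨y, hy, huniq⟩ := h
  refine ⟨g y, congrArg g hy, fun x hx => ?_⟩
  rw [← hx, Function.comp_apply, huniq (f x) (congrArg f hx)]

section Waterfall

variable {m : ℕ}

/-- The most senior claim `0` is not truncated at `0`: it absorbs negative assets, as `r¹` does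
in `LiqSystem`. -/
def waterfall (P : Fin m → ℝ) (A : ℝ) (i : Fin m) : ℝ :=
  if (i : ℕ) = 0 then min (P i) A else min (P i) (max (A - ∑ l ∈ Iio i, P l) 0)

def surplus (P : Fin m → ℝ) (A : ℝ) : ℝ := max (A - ∑ l, P l) 0

theorem min_max_sub_zero {P c A : ℝ} (hP : 0 ≤ P) :
    min P (max (A - c) 0) = min A (c + P) - min A c := by
  simp only [min_def, max_def]
  split_ifs <;> linarith

theorem sum_waterfall_add_surplus (hm : 0 < m) {P : Fin m → ℝ} (hP : ∀ i, 0 ≤ P i) (A : ℝ) :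
    ∑ i, waterfall P A i + surplus P A = A := by
  -- `C k` is the total of the `k` most senior claims; the payouts telescope in `min A (C k)`.
  set C : ℕ → ℝ := fun k => ∑ l ∈ range k, if h : l < m then P ⟨l, h⟩ else 0 with hC
  have hC_Iio (i : Fin m) : ∑ l ∈ Iio i, P l = C i := by
    simp only [hC]
    rw [← Nat.Iio_eq_range, ← Fin.map_valEmbedding_Iio, sum_map]
    exact sum_congr rfl fun l _ => by simp
  have hC_succ (i : Fin m) : C (i + 1) = C i + P i := by simp [hC, sum_range_succ]
  have hC_univ : ∑ l, P l = C m := by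
    simp only [hC]
    rw [← Fin.sum_univ_eq_sum_range]
    simp
  have hC_zero : C 0 = 0 := by simp [hC]
  have hstep (i : Fin m) : waterfall P A i =
      (min A (C (i + 1)) - min A (C i)) + if (i : ℕ) = 0 then min A 0 else 0 := by
    rw [waterfall, hC_succ]
    split_ifs with hi
    · rw [hi, hC_zero, zero_add, sub_add_cancel, min_comm]
    · rw [← hC_Iio, min_max_sub_zero (hP i), add_zero]
  have htel : ∑ i : Fin m, (min A (C (i + 1)) - min A (C i)) = min A (C m) - min A (C 0) := by
    rw [Fin.sum_univ_eq_sum_range (fun k => min A (C (k + 1)) - min A (C k)),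
      sum_range_sub (fun k => min A (C k))]
  have hsenior : ∑ i : Fin m, (if (i : ℕ) = 0 then min A 0 else 0) = min A 0 := by
    rw [Fin.sum_univ_eq_sum_range (fun k => if k = 0 then min A 0 else 0)]
    simp [hm]
  have hsurplus : surplus P A = A - min A (C m) := by
    rw [surplus, hC_univ, ← max_sub_sub_left, sub_self, max_comm]
  rw [sum_congr rfl fun i _ => hstep i, sum_add_distrib, htel, hsenior, hsurplus, hC_zero]
  ring

variable {P P' : Fin m → ℝ} {A A' : ℝ}

theorem sub_sum_le_sub_sum (hP : P ≤ P') (hA : ∑ l, (P' l - P l) ≤ A' - A)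
    (s : Finset (Fin m)) : A - ∑ l ∈ s, P l ≤ A' - ∑ l ∈ s, P' l := by
  have := sum_le_sum_of_subset_of_nonneg (subset_univ s) fun l _ _ => sub_nonneg.2 (hP l)
  rw [sum_sub_distrib] at this
  linarith

theorem waterfall_le_waterfall (hP : P ≤ P') (hA : ∑ l, (P' l - P l) ≤ A' - A) (i : Fin m) :
    waterfall P A i ≤ waterfall P' A' i := by
  have hA₀ : A ≤ A' := by simpa using sub_sum_le_sub_sum hP hA ∅
  unfold waterfall
  split_ifs
  · exact min_le_min (hP i) hA₀
  · exact min_le_min (hP i) (max_le_max_right 0 (sub_sum_le_sub_sum hP hA _))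

theorem surplus_le_surplus (hP : P ≤ P') (hA : ∑ l, (P' l - P l) ≤ A' - A) :
    surplus P A ≤ surplus P' A' :=
  max_le_max_right 0 (sub_sum_le_sub_sum hP hA _)

theorem sum_abs_sub_waterfall_add_abs_sub_surplus (hm : 0 < m) (hP₀ : ∀ i, 0 ≤ P i)
    (hP : P ≤ P') (hA : ∑ l, (P' l - P l) ≤ A' - A) :
    ∑ i, |waterfall P' A' i - waterfall P A i| + |surplus P' A' - surplus P A| = A' - A := by
  simp only [abs_of_nonneg (sub_nonneg.2 (waterfall_le_waterfall hP hA _)),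
    abs_of_nonneg (sub_nonneg.2 (surplus_le_surplus hP hA)), sum_sub_distrib]
  have := sum_waterfall_add_surplus hm hP₀ A
  have := sum_waterfall_add_surplus hm (fun i => (hP₀ i).trans (hP i)) A'
  linarith

theorem sum_abs_sub_waterfall_add_abs_sub_surplus_le (hm : 0 < m) {ψ : Fin m → ℝ → ℝ}
    (hψ₀ : ∀ i t, 0 ≤ ψ i t) (hψ : ∀ i, Monotone (ψ i))
    (hlip : ∀ t t' : ℝ, t' ≤ t → ∑ i, (ψ i t - ψ i t') ≤ t - t') (c t t' : ℝ) :
    ∑ i, |waterfall (ψ · t) (c + t) i - waterfall (ψ · t') (c + t') i|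
      + |surplus (ψ · t) (c + t) - surplus (ψ · t') (c + t')| ≤ |t - t'| := by
  wlog h : t' ≤ t generalizing t t'
  · rw [abs_sub_comm t t']
    convert this t' t (le_of_not_ge h) using 2
    · exact sum_congr rfl fun i _ => abs_sub_comm _ _
    · exact abs_sub_comm _ _
  rw [sum_abs_sub_waterfall_add_abs_sub_surplus hm (hψ₀ · t') (hψ · h) (by linarith [hlip t t' h]),
    abs_of_nonneg (sub_nonneg.2 h)]
  exact (add_sub_add_left_eq_sub _ _ _).le

end Waterfall

section LiquidationSystem

variable {n m : ℕ}

def inflow (Ms : Matrix (Fin n) (Fin n) ℝ) (Md : Fin m → Matrix (Fin n) (Fin n) ℝ)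
    (r : Fin m → Fin n → ℝ) (s : Fin n → ℝ) : Fin n → ℝ :=
  Ms *ᵥ s + ∑ l, Md l *ᵥ r l

def liqValues (a : Fin n → ℝ) (psi : Fin m → Fin n → ℝ → ℝ) (y : Fin n → ℝ) :
    (Fin m → Fin n → ℝ) × (Fin n → ℝ) :=
  (fun i k => waterfall (psi · k (y k)) (a k + y k) i,
    fun k => surplus (psi · k (y k)) (a k + y k))

theorem liqSystem_iff_liqValues_inflow_eq {a : Fin n → ℝ} {Ms : Matrix (Fin n) (Fin n) ℝ}
    {Md : Fin m → Matrix (Fin n) (Fin n) ℝ}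
    {d : Fin m → (Fin m → Fin n → ℝ) → (Fin n → ℝ) → (Fin n → ℝ)}
    {psi : Fin m → Fin n → ℝ → ℝ}
    (hd_eq : ∀ i r s j, d i r s j = psi i j (Ms.mulVec s j + ∑ l, (Md l).mulVec (r l) j))
    (r : Fin m → Fin n → ℝ) (s : Fin n → ℝ) :
    LiqSystem a Ms Md d r s ↔ liqValues a psi (inflow Ms Md r s) = (r, s) := by
  have hA : a + Ms *ᵥ s + ∑ i, Md i *ᵥ r i = a + inflow Ms Md r s := add_assoc _ _ _
  have hd (i : Fin m) : d i r s = fun k => psi i k (inflow Ms Md r s k) := by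
    ext k
    simp [hd_eq, inflow]
  simp only [LiqSystem, hA, hd, liqValues, waterfall, surplus, Prod.mk.injEq, funext_iff, vmin,
    vpos, Pi.add_apply, Pi.sub_apply, Finset.sum_apply]
  constructor
  · rintro ⟨h₀, h₁, hs⟩
    refine ⟨fun i k => ?_, fun k => (hs k).symm⟩
    split_ifs with hi
    exacts [(h₀ i hi k).symm, (h₁ i hi k).symm]
  · rintro ⟨hr, hs⟩
    refine ⟨fun j hj k => ?_, fun j hj k => ?_, fun k => (hs k).symm⟩
    · simpa [hj] using (hr j k).symm
    · simpa [hj] using (hr j k).symm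

theorem l1_inflow_sub_le {Ms : Matrix (Fin n) (Fin n) ℝ} {Md : Fin m → Matrix (Fin n) (Fin n) ℝ}
    {K : ℝ} (hMs : ∀ i j, 0 ≤ Ms i j) (hKs : ∀ j, ∑ i, Ms i j ≤ K)
    (hMd : ∀ l i j, 0 ≤ Md l i j) (hKd : ∀ l j, ∑ i, Md l i j ≤ K)
    (r r' : Fin m → Fin n → ℝ) (s s' : Fin n → ℝ) :
    l1 (inflow Ms Md r s - inflow Ms Md r' s')
      ≤ K * (∑ l, l1 (r l - r' l) + l1 (s - s')) := by
  have hsub : inflow Ms Md r s - inflow Ms Md r' s' = inflow Ms Md (r - r') (s - s') := by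
    simp only [inflow, mulVec_sub, Pi.sub_apply, sum_sub_distrib]
    abel
  rw [hsub, inflow]
  calc l1 (Ms *ᵥ (s - s') + ∑ l, Md l *ᵥ (r - r') l)
      ≤ l1 (Ms *ᵥ (s - s')) + ∑ l, l1 (Md l *ᵥ (r - r') l) :=
        (l1_add_le _ _).trans (add_le_add le_rfl (l1_sum_le _ _))
    _ ≤ K * l1 (s - s') + ∑ l, K * l1 (r l - r' l) :=
        add_le_add (l1_mulVec_le hMs hKs _)
          (sum_le_sum fun l _ => l1_mulVec_le (hMd l) (hKd l) _)
    _ = K * (∑ l, l1 (r l - r' l) + l1 (s - s')) := by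
        rw [← mul_sum]
        ring

theorem l1_sub_liqValues_le (hm : 0 < m) (a : Fin n → ℝ) {psi : Fin m → Fin n → ℝ → ℝ}
    (hpsi_nonneg : ∀ i j y, 0 ≤ psi i j y) (hpsi_mono : ∀ i j, Monotone (psi i j))
    (hpsi_lip : ∀ j (y1 y2 : ℝ), y2 ≤ y1 → ∑ i, (psi i j y1 - psi i j y2) ≤ y1 - y2)
    (y y' : Fin n → ℝ) :
    ∑ l, l1 ((liqValues a psi y).1 l - (liqValues a psi y').1 l)
      + l1 ((liqValues a psi y).2 - (liqValues a psi y').2) ≤ l1 (y - y') := by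
  simp only [l1, liqValues, Pi.sub_apply]
  rw [sum_comm, ← sum_add_distrib]
  exact sum_le_sum fun k _ => sum_abs_sub_waterfall_add_abs_sub_surplus_le hm
    (hpsi_nonneg · k) (hpsi_mono · k) (hpsi_lip k) (a k) (y k) (y' k)

end LiquidationSystem

theorem existsUnique_liqSystem_solution_general {n m : ℕ} (hm : 0 < m)
    (a : Fin n → ℝ)
    (Ms : Matrix (Fin n) (Fin n) ℝ) (hMs : StrictlyLeftSubstochastic Ms)
    (Md : Fin m → Matrix (Fin n) (Fin n) ℝ) (hMd : ∀ i, StrictlyLeftSubstochastic (Md i))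
    (d : Fin m → (Fin m → Fin n → ℝ) → (Fin n → ℝ) → (Fin n → ℝ))
    (psi : Fin m → Fin n → ℝ → ℝ)
    (hpsi_nonneg : ∀ i j y, 0 ≤ psi i j y)
    (hpsi_mono : ∀ i j, Monotone (psi i j))
    (hd_eq : ∀ i r s j, d i r s j = psi i j (Ms.mulVec s j + ∑ l, (Md l).mulVec (r l) j))
    (hpsi_lip : ∀ j (y1 y2 : ℝ), y2 ≤ y1 → ∑ i, (psi i j y1 - psi i j y2) ≤ y1 - y2) :
    ∃! p : (Fin m → Fin n → ℝ) × (Fin n → ℝ), LiqSystem a Ms Md d p.1 p.2 := by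
  obtain ⟨K, hK0, hK1, hKs, hKd⟩ := exists_colSum_le_of_strictlyLeftSubstochastic hMs hMd
  have hcontr : ∃! y, Function.IsFixedPt
      ((fun p : (Fin m → Fin n → ℝ) × (Fin n → ℝ) => inflow Ms Md p.1 p.2) ∘ liqValues a psi) y :=
    existsUnique_isFixedPt_of_l1_le hK0 hK1 fun y y' =>
      (l1_inflow_sub_le hMs.1 hKs (fun l => (hMd l).1) hKd _ _ _ _).trans
        (mul_le_mul_of_nonneg_left
          (l1_sub_liqValues_le hm a hpsi_nonneg hpsi_mono hpsi_lip y y') hK0)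
  exact (existsUnique_congr fun p : (Fin m → Fin n → ℝ) × (Fin n → ℝ) =>
    liqSystem_iff_liqValues_inflow_eq hd_eq p.1 p.2).2
      (Function.existsUnique_isFixedPt_comp hcontr)

/-- Uniqueness of the no-arbitrage price equilibrium under the seniority structure
condition: the liquidation value system has exactly one solution. -/
theorem existsUnique_liqSystem_solution {n m : ℕ} (hn : 0 < n) (hm : 0 < m)
    (a : Fin n → ℝ) (ha : ∀ k, 0 ≤ a k)
    (Ms : Matrix (Fin n) (Fin n) ℝ) (hMs : StrictlyLeftSubstochastic Ms)
    (Md : Fin m → Matrix (Fin n) (Fin n) ℝ) (hMd : ∀ i, StrictlyLeftSubstochastic (Md i))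
    (d : Fin m → (Fin m → Fin n → ℝ) → (Fin n → ℝ) → (Fin n → ℝ))
    (hd : ∀ i r s k, 0 ≤ d i r s k)
    (psi : Fin m → Fin n → ℝ → ℝ)
    (hpsi_nonneg : ∀ i j y, 0 ≤ psi i j y)
    (hpsi_mono : ∀ i j, Monotone (psi i j))
    (hd_eq : ∀ i r s j, d i r s j = psi i j (Ms.mulVec s j + ∑ l, (Md l).mulVec (r l) j))
    (hpsi_lip : ∀ j (y1 y2 : ℝ), y2 ≤ y1 → ∑ i, (psi i j y1 - psi i j y2) ≤ y1 - y2) :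
    ∃! p : (Fin m → Fin n → ℝ) × (Fin n → ℝ), LiqSystem a Ms Md d p.1 p.2 :=
  existsUnique_liqSystem_solution_general hm a Ms hMs Md hMd d psi hpsi_nonneg hpsi_mono hd_eq
    hpsi_lip
end
end
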